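/- (Detection Capability, characterization.) Let n ≥ 2, d ≥ 2, and let M be a finite set of nodes (the malicious clients) of the d^n hypermesh such that either |M| < n, or |M| = n and some two distinct elements of M lie in a common edge. Then for every node x of the hypermesh, every edge containing x contains an element of M if and only if x ∈ M; that is, the detection rule achieves 100% true positive rate and 0% false positive rate. -/

import Mathlib

/-- The edge (group) through node `x` in direction `k` of the `d^n` hypermesh:
all nodes agreeing with `x` at every coordinate other than `k`. -/
def edgeThrough (n d : ℕ) (k : Fin n) (x : Fin n → Fin d) : Finset (Fin n → Fin d) :=
  Finset.univ.filter (fun y => ∀ j, j ≠ k → y j = x j)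

/-- A set of nodes is an edge of the `d^n` hypermesh when it is the edge through
some node in some direction. -/
def IsEdge (n d : ℕ) (E : Finset (Fin n → Fin d)) : Prop :=
  ∃ k x, E = edgeThrough n d k x

/-- The finset of all edges of the `d^n` hypermesh. -/
def hypermeshEdges (n d : ℕ) : Finset (Finset (Fin n → Fin d)) :=
  Finset.univ.image (fun p : Fin n × (Fin n → Fin d) => edgeThrough n d p.1 p.2)


/-!
If `x ∉ M` but every edge through `x` meets `M`, pick in each direction `k` a malicious node
`m k` on the `k`-th edge through `x`. Since `m k ≠ x`, it differs from `x` in coordinate `k`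
and only there; hence the `m k` are `n` distinct nodes, any two of which differ in two
coordinates and so share no edge. Thus `n ≤ |M|`, and if `|M| = n` then `M` is exactly
`{m k}`, so no two distinct malicious nodes share an edge.
-/

open Finset

section Hypermesh

variable {n d : ℕ}

@[simp]
lemma mem_edgeThrough {k : Fin n} {x y : Fin n → Fin d} :
    y ∈ edgeThrough n d k x ↔ ∀ j, j ≠ k → y j = x j := by
  simp [edgeThrough]

lemma mem_edgeThrough_self (k : Fin n) (x : Fin n → Fin d) : x ∈ edgeThrough n d k x :=
  mem_edgeThrough.2 fun _ _ => rfl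

lemma eq_of_mem_edgeThrough_of_apply_eq {k : Fin n} {x y : Fin n → Fin d}
    (hy : y ∈ edgeThrough n d k x) (hk : y k = x k) : y = x := by
  funext j
  by_cases hj : j = k
  · exact hj ▸ hk
  · exact mem_edgeThrough.1 hy j hj

lemma eq_of_mem_edgeThrough_of_mem_edgeThrough {i j : Fin n} {x y : Fin n → Fin d}
    (hi : y ∈ edgeThrough n d i x) (hj : y ∈ edgeThrough n d j x) (hij : i ≠ j) : y = x :=
  eq_of_mem_edgeThrough_of_apply_eq hi (mem_edgeThrough.1 hj i hij)

lemma injective_of_mem_edgeThrough {x : Fin n → Fin d} {m : Fin n → Fin n → Fin d}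
    (hm : ∀ k, m k ∈ edgeThrough n d k x) (hmx : ∀ k, m k ≠ x) : Function.Injective m := by
  intro i j h
  by_contra hij
  exact hmx i (eq_of_mem_edgeThrough_of_mem_edgeThrough (hm i) (h ▸ hm j) hij)

lemma not_mem_of_mem_edgeThrough_of_mem_edgeThrough {i j : Fin n} {x a b : Fin n → Fin d}
    (ha : a ∈ edgeThrough n d i x) (hb : b ∈ edgeThrough n d j x) (hax : a ≠ x) (hbx : b ≠ x)
    (hij : i ≠ j) {E : Finset (Fin n → Fin d)} (hE : IsEdge n d E) (haE : a ∈ E) : b ∉ E := by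
  obtain ⟨k, z, rfl⟩ := hE
  intro hbE
  have hab : ∀ l, l ≠ k → a l = b l := fun l hl =>
    (mem_edgeThrough.1 haE l hl).trans (mem_edgeThrough.1 hbE l hl).symm
  by_cases hik : i = k
  · subst hik
    exact hbx <| eq_of_mem_edgeThrough_of_apply_eq hb <|
      (hab j (Ne.symm hij)).symm.trans (mem_edgeThrough.1 ha j (Ne.symm hij))
  · exact hax <| eq_of_mem_edgeThrough_of_apply_eq ha <|
      (hab i hik).trans (mem_edgeThrough.1 hb i hij)

end Hypermesh

theorem detection_characterization_general {n d : ℕ}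
    (M : Finset (Fin n → Fin d))
    (hM : M.card < n ∨ (M.card = n ∧ ∃ a ∈ M, ∃ b ∈ M, a ≠ b ∧
      ∃ E : Finset (Fin n → Fin d), IsEdge n d E ∧ a ∈ E ∧ b ∈ E)) :
    ∀ x : Fin n → Fin d,
      (∀ E : Finset (Fin n → Fin d), IsEdge n d E → x ∈ E → ∃ m ∈ M, m ∈ E) ↔ x ∈ M := by
  intro x
  refine ⟨fun hflag => ?_, fun hxM _ _ hxE => ⟨x, hxM, hxE⟩⟩
  by_contra hx
  choose m hmM hm using fun k => hflag _ ⟨k, x, rfl⟩ (mem_edgeThrough_self k x)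
  have hmx : ∀ k, m k ≠ x := fun k h => hx (h ▸ hmM k)
  have hinj := injective_of_mem_edgeThrough hm hmx
  have hcard : n ≤ #M := by
    simpa using card_le_card_of_injOn (s := univ) m (fun k _ => hmM k) hinj.injOn
  rcases hM with hlt | ⟨hc, a, ha, b, hb, hab, E, hE, haE, hbE⟩
  · omega
  have himg : univ.image m = M :=
    eq_of_subset_of_card_le (image_subset_iff.2 fun k _ => hmM k)
      (by rw [card_image_of_injective _ hinj, hc, card_univ, Fintype.card_fin])
  obtain ⟨i, -, rfl⟩ := mem_image.1 (himg ▸ ha)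
  obtain ⟨j, -, rfl⟩ := mem_image.1 (himg ▸ hb)
  exact not_mem_of_mem_edgeThrough_of_mem_edgeThrough (hm i) (hm j) (hmx i) (hmx j)
    (fun hij => hab (hij ▸ rfl)) hE haE hbE

/-- Detection capability of MUD-PQFed (characterization): under the same
hypotheses on the malicious set `M`, a node `x` has all of its edges flagged
(i.e. every edge containing `x` contains a malicious client) iff `x ∈ M`;
this is a 100% true positive rate and a 0% false positive rate. -/
theorem detection_characterization {n d : ℕ} (hn : 2 ≤ n) (hd : 2 ≤ d)
    (M : Finset (Fin n → Fin d))
    (hM : M.card < n ∨ (M.card = n ∧ ∃ a ∈ M, ∃ b ∈ M, a ≠ b ∧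
      ∃ E : Finset (Fin n → Fin d), IsEdge n d E ∧ a ∈ E ∧ b ∈ E)) :
    ∀ x : Fin n → Fin d,
      (∀ E : Finset (Fin n → Fin d), IsEdge n d E → x ∈ E → ∃ m ∈ M, m ∈ E) ↔ x ∈ M :=
  detection_characterization_general M hM
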